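/- arXiv:1403.2942 — 3 statements merged into one kernel-verified Lean document; each statement's English description precedes it below -/
import Mathlib

section
/- For any ring R and any positive integer m, the natural map W⃖(R/(p^{m+1})) → W⃖(R/(p^m)) induced by functoriality is bijective, where W⃖(S) denotes the inverse limit of the finite p-typical Witt vector rings W_{p^n}(S) along the Frobenius transition maps. -/
/-!
Let `f : A → B` be surjective with kernel `I` such that `I ^ 2 = 0` and `p I = 0`; for
`R/(p^{m+1}) → R/(p^m)` the kernel is `(p^m)/(p^{m+1})`, square-zero because `2m ≥ m + 1`.
The `n`-th coefficient of the Frobenius of a Witt vector `w` is `w_n ^ p + p · P_n(w)` for an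
integral polynomial `P_n`; comparing with `w = 0` shows that Frobenius kills every Witt vector
with coefficients in `I`. Hence the truncated Frobenius `W_{p^{n+2}}(A) → W_{p^{n+1}}(A)` factors
through `W_{p^{n+2}}(B)`: the `n`-th component of a point of `W⃖(A)` is determined by the image
of its `(n+1)`-st component, and applying Frobenius to lifts of the components of a point of
`W⃖(B)` gives its unique preimage.
-/

open WittVector

/-- Frobenius `W_{pⁿ⁺¹}(R) → W_{pⁿ}(R)` on finite-length `p`-typical Witt vectors. -/
noncomputable def truncatedFrobenius (p : ℕ) [Fact p.Prime] (R : Type*) [CommRing R] (n : ℕ)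
    (x : TruncatedWittVector p (n + 2) R) : TruncatedWittVector p (n + 1) R :=
  WittVector.truncate (n + 1) (WittVector.frobenius x.out)

/-- `W⃖(R)`: the inverse limit of the `W_{pⁿ}(R)` along Frobenius. -/
def Warrow (p : ℕ) [Fact p.Prime] (R : Type*) [CommRing R] : Type _ :=
  { x : ∀ n : ℕ, TruncatedWittVector p (n + 1) R //
      ∀ n : ℕ, truncatedFrobenius p R n (x (n + 1)) = x n }

/-- The componentwise map on truncated Witt vectors induced by a ring map. -/
def truncatedMap {R S : Type*} [CommRing R] [CommRing S] (p n : ℕ) (f : R →+* S)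
    (x : TruncatedWittVector p n R) : TruncatedWittVector p n S :=
  TruncatedWittVector.mk p fun i => f (x.coeff i)

open MvPolynomial

theorem MvPolynomial.aeval_sub_aeval_mem {σ R A : Type*} [CommRing R] [CommRing A]
    [Algebra R A] {I : Ideal A} {c c' : σ → A} (hc : ∀ i, c i - c' i ∈ I)
    (q : MvPolynomial σ R) : aeval c q - aeval c' q ∈ I := by
  rw [← Ideal.Quotient.eq, ← Ideal.Quotient.mkₐ_eq_mk R, comp_aeval_apply, comp_aeval_apply]
  congr 2
  funext i
  exact Ideal.Quotient.eq.mpr (hc i)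

theorem truncatedMap_surjective {A B : Type*} [CommRing A] [CommRing B] {f : A →+* B}
    (p : ℕ) (hf : Function.Surjective f) (k : ℕ) :
    Function.Surjective (truncatedMap p k f) := by
  intro u
  refine ⟨TruncatedWittVector.mk p fun i => (hf (u.coeff i)).choose, ?_⟩
  ext i
  simp only [truncatedMap, TruncatedWittVector.coeff_mk, (hf _).choose_spec]

universe u

section

variable {p : ℕ} [hp : Fact p.Prime]

namespace WittVector

variable {A : Type*} [CommRing A]

theorem truncate_frobenius_eq_zero {n : ℕ} {w : WittVector p A} (hw : truncate (n + 2) w = 0) :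
    truncate (n + 1) (frobenius w) = 0 := by
  rw [eq_iterate_verschiebung ((mem_ker_truncate (n + 2) w).mp hw),
    Function.iterate_succ_apply', frobenius_verschiebung, map_mul,
    (mem_ker_truncate _ _).mpr fun i hi => iterate_verschiebung_coeff_eq_zero _ hi, zero_mul]

theorem frobenius_eq_zero_of_coeff_mem {I : Ideal A} (hI : I ^ 2 = ⊥)
    (hpI : ∀ a ∈ I, (p : A) * a = 0) {w : WittVector p A} (hw : ∀ i, w.coeff i ∈ I) :
    frobenius w = 0 := by
  ext n
  rw [zero_coeff]
  have hpow : w.coeff n ^ p = 0 := by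
    rw [← pow_mul_pow_sub _ hp.out.two_le, ← Ideal.mem_bot, ← hI]
    exact Ideal.mul_mem_right _ _ (Ideal.pow_mem_pow (hw n) 2)
  have hdiff : aeval w.coeff (frobeniusPolyAux p n) -
      aeval (0 : WittVector p A).coeff (frobeniusPolyAux p n) ∈ I :=
    aeval_sub_aeval_mem (fun i => by simpa only [zero_coeff, sub_zero] using hw i) _
  calc (frobenius w).coeff n
        = (frobenius w).coeff n - (frobenius (0 : WittVector p A)).coeff n := by
          rw [map_zero, zero_coeff, sub_zero]
      _ = w.coeff n ^ p - 0 ^ p + p * (aeval w.coeff (frobeniusPolyAux p n) -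
            aeval (0 : WittVector p A).coeff (frobeniusPolyAux p n)) := by
          simp only [coeff_frobenius, frobeniusPoly, map_add, map_mul, map_pow, aeval_X,
            map_natCast, zero_coeff]
          ring
      _ = 0 := by rw [hpow, hpI _ hdiff, zero_pow hp.out.ne_zero, sub_self, add_zero]

end WittVector

theorem TruncatedWittVector.truncate_out {A : Type*} [CommRing A] {k : ℕ}
    (z : TruncatedWittVector p k A) : WittVector.truncate k z.out = z := by
  ext i
  rw [WittVector.coeff_truncate, TruncatedWittVector.coeff_out]

open WittVector

section Truncated

variable {A B : Type u} [CommRing A] [CommRing B] (f : A →+* B)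

theorem truncatedMap_truncate {k : ℕ} (w : WittVector p A) :
    truncatedMap p k f (truncate k w) = truncate k (WittVector.map f w) := by
  ext i
  simp only [truncatedMap, TruncatedWittVector.coeff_mk, coeff_truncate, map_coeff]

theorem truncatedFrobenius_eq_truncate_frobenius {n : ℕ} {z : TruncatedWittVector p (n + 2) A}
    {w : WittVector p A} (hw : truncate (n + 2) w = z) :
    truncatedFrobenius p A n z = truncate (n + 1) (frobenius w) := by
  rw [truncatedFrobenius, ← sub_eq_zero, ← map_sub, ← map_sub]
  exact truncate_frobenius_eq_zero (by rw [map_sub, hw, TruncatedWittVector.truncate_out, sub_self])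

theorem truncatedMap_truncatedFrobenius {n : ℕ} (z : TruncatedWittVector p (n + 2) A) :
    truncatedMap p (n + 1) f (truncatedFrobenius p A n z) =
      truncatedFrobenius p B n (truncatedMap p (n + 2) f z) := by
  rw [truncatedFrobenius_eq_truncate_frobenius (w := WittVector.map f z.out)
    (by rw [← truncatedMap_truncate, TruncatedWittVector.truncate_out]),
    truncatedFrobenius, truncatedMap_truncate, (frobenius_isPoly p).map f z.out]

theorem truncatedFrobenius_congr (hI : RingHom.ker f ^ 2 = ⊥)
    (hpI : ∀ a ∈ RingHom.ker f, (p : A) * a = 0) {n : ℕ}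
    {z z' : TruncatedWittVector p (n + 2) A}
    (h : truncatedMap p (n + 2) f z = truncatedMap p (n + 2) f z') :
    truncatedFrobenius p A n z = truncatedFrobenius p A n z' := by
  set d := z.out - z'.out
  have hd : ∀ i < n + 2, d.coeff i ∈ RingHom.ker f := by
    intro i hi
    have : truncate (n + 2) (WittVector.map f d) = 0 := by
      rw [map_sub, map_sub, ← truncatedMap_truncate, ← truncatedMap_truncate,
        TruncatedWittVector.truncate_out, TruncatedWittVector.truncate_out, h, sub_self]
    simpa [map_coeff] using (mem_ker_truncate (n + 2) _).mp this i hi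
  have hinit : frobenius (init (n + 2) d) = 0 := by
    refine frobenius_eq_zero_of_coeff_mem hI hpI fun i => ?_
    simp only [init, select, coeff_mk]
    split_ifs with hi
    exacts [hd i hi, zero_mem _]
  have htail : truncate (n + 1) (frobenius (tail (n + 2) d)) = 0 := by
    refine truncate_frobenius_eq_zero ((mem_ker_truncate _ _).mpr fun i hi => ?_)
    simp only [tail, select, coeff_mk, if_neg (Nat.not_le.mpr hi)]
  -- Frobenius kills `init (n + 2) d`, and `tail (n + 2) d` is invisible after truncation.
  rw [truncatedFrobenius, truncatedFrobenius, ← sub_eq_zero, ← map_sub, ← map_sub]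
  change truncate (n + 1) (frobenius d) = 0
  rw [← init_add_tail d (n + 2), map_add, map_add, hinit, htail, map_zero, zero_add]

end Truncated

theorem Warrow.existsUnique_truncatedMap_eq {A B : Type u} [CommRing A] [CommRing B]
    {f : A →+* B} (hf : Function.Surjective f) (hI : RingHom.ker f ^ 2 = ⊥)
    (hpI : ∀ a ∈ RingHom.ker f, (p : A) * a = 0) (y : Warrow p B) :
    ∃! x : Warrow p A, ∀ n, truncatedMap p (n + 1) f (x.1 n) = y.1 n := by
  choose L hL using fun n => truncatedMap_surjective p hf (n + 2) (y.1 (n + 1))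
  have hmap : ∀ n, truncatedMap p (n + 1) f (truncatedFrobenius p A n (L n)) = y.1 n := by
    intro n
    rw [truncatedMap_truncatedFrobenius, hL, y.2]
  have hcompat : ∀ n, truncatedFrobenius p A n (truncatedFrobenius p A (n + 1) (L (n + 1))) =
      truncatedFrobenius p A n (L n) := fun n =>
    truncatedFrobenius_congr f hI hpI ((hmap (n + 1)).trans (hL n).symm)
  refine ⟨⟨fun n => truncatedFrobenius p A n (L n), hcompat⟩, hmap, fun x hx => ?_⟩
  refine Subtype.ext (funext fun n => ?_)
  change x.1 n = truncatedFrobenius p A n (L n)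
  rw [← x.2 n, ← hcompat]
  exact truncatedFrobenius_congr f hI hpI ((hx (n + 1)).trans (hmap (n + 1)).symm)

end

/-- For any ring `R` and any positive integer `m`, the functorial map
`W⃖(R/(p^{m+1})) → W⃖(R/(p^m))` is bijective. -/
theorem stmt10 (p : ℕ) [Fact p.Prime] (R : Type*) [CommRing R] (m : ℕ) (hm : 1 ≤ m) :
    ∀ y : Warrow p (R ⧸ Ideal.span {(p : R) ^ m}),
      ∃! x : Warrow p (R ⧸ Ideal.span {(p : R) ^ (m + 1)}),
        ∀ n : ℕ,
          truncatedMap p (n + 1)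
            (Ideal.Quotient.factor (S := Ideal.span {(p : R) ^ (m + 1)})
              (T := Ideal.span {(p : R) ^ m})
              (Ideal.span_singleton_le_span_singleton.mpr (pow_dvd_pow _ (by omega))))
            (x.1 n) = y.1 n := by
  refine Warrow.existsUnique_truncatedMap_eq (Ideal.Quotient.factor_surjective _) ?_ ?_
  · rw [Ideal.Quotient.factor_ker, ← Ideal.map_pow, Ideal.span_singleton_pow, ← pow_mul]
    exact Ideal.map_mk_eq_bot_of_le
      (Ideal.span_singleton_le_span_singleton.mpr (pow_dvd_pow _ (by omega)))
  · intro a ha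
    rw [Ideal.Quotient.factor_ker, Ideal.mem_map_iff_of_surjective _ Ideal.Quotient.mk_surjective]
      at ha
    obtain ⟨_, hr, rfl⟩ := ha
    obtain ⟨r, rfl⟩ := Ideal.mem_span_singleton'.mp hr
    rw [← map_natCast (Ideal.Quotient.mk _), ← map_mul, Ideal.Quotient.eq_zero_iff_mem,
      Ideal.mem_span_singleton']
    exact ⟨r, by ring⟩
end

section
/- Let R be a p-adically complete (and separated) ring. Then the natural map W⃖(R) → W⃖(R/(p)) is an isomorphism, where W⃖(S) denotes the inverse limit of the rings W_{p^n}(S) under the Frobenius transition maps. -/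
open WittVector

/-! The `n`-th coefficient of `F w` (`F` the Frobenius of `W(R)`) is
`w n ^ p + p * Q (w 0, …, w (n + 1))` for an integral polynomial `Q`. So `F` improves
congruences: if `w ≡ w' mod pᵏ` with `k ≥ 1` in the coefficients up to `n + 1`, then
`F w ≡ F w' mod pᵏ⁺¹` in the coefficient `n`.

Two compatible lifts `x, x'` of `y` satisfy `x n = Fᵏ (x (n + k))` and
`x (n + k) ≡ x' (n + k) mod p`, hence `x n ≡ x' n mod pᵏ⁺¹` for every `k`, so they agree.
For arbitrary lifts `Z n ∈ W(R)` of the components of `y`, the sequence `k ↦ Fᵏ (Z (n + k))`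
is coefficientwise `p`-adically Cauchy, and its limits form a compatible system because
`F (Fᵏ (Z (n + 1 + k))) = Fᵏ⁺¹ (Z (n + k + 1))`. -/

theorem pow_succ_dvd_pow_sub_pow {R : Type*} [CommRing R] {n k : ℕ} {a b : R} (hk : k ≠ 0)
    (h : (n : R) ^ k ∣ a - b) : (n : R) ^ (k + 1) ∣ a ^ n - b ^ n := by
  rw [← geom_sum₂_mul, pow_succ']
  exact mul_dvd_mul (dvd_geom_sum₂_self ((dvd_pow_self _ hk).trans h)) h

namespace WittVector

open MvPolynomial

variable {p : ℕ} {S : Type*} [CommRing S]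

theorem aeval_frobeniusPolyAux_congr (n : ℕ) {g g' : ℕ → S}
    (h : ∀ j ≤ n + 1, g j = g' j) :
    aeval g (frobeniusPolyAux p n) = aeval g' (frobeniusPolyAux p n) := by
  induction n using Nat.strong_induction_on generalizing g g' with
  | _ n ih =>
    rw [frobeniusPolyAux_eq]
    simp only [map_sub, map_sum, map_mul, map_pow, aeval_X, aeval_C, h (n + 1) le_rfl]
    refine congrArg₂ _ rfl (Finset.sum_congr rfl fun i hi => Finset.sum_congr rfl fun j _ => ?_)
    have hi : i < n := Finset.mem_range.mp hi
    rw [h i (by omega), ih i hi fun j hj => h j (by omega)]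

theorem aeval_frobeniusPolyAux_sub_dvd (n : ℕ) {d : S} {g g' : ℕ → S}
    (h : ∀ j ≤ n + 1, d ∣ g j - g' j) :
    d ∣ aeval g (frobeniusPolyAux p n) - aeval g' (frobeniusPolyAux p n) := by
  simp only [← Ideal.mem_span_singleton, ← Ideal.Quotient.eq] at h ⊢
  rw [← Ideal.Quotient.mkₐ_eq_mk ℤ, comp_aeval_apply, comp_aeval_apply]
  exact aeval_frobeniusPolyAux_congr n h

variable [Fact p.Prime]

theorem coeff_frobenius_eq_pow_add (w : WittVector p S) (n : ℕ) :
    (frobenius w).coeff n = w.coeff n ^ p + p * aeval w.coeff (frobeniusPolyAux p n) := by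
  simp [coeff_frobenius, frobeniusPoly]

theorem coeff_frobenius_congr {w w' : WittVector p S} {n : ℕ}
    (h : ∀ j ≤ n + 1, w.coeff j = w'.coeff j) :
    (frobenius w).coeff n = (frobenius w').coeff n := by
  rw [coeff_frobenius_eq_pow_add, coeff_frobenius_eq_pow_add, h n (by omega),
    aeval_frobeniusPolyAux_congr n h]

theorem pow_succ_dvd_coeff_frobenius_sub {k n : ℕ} (hk : k ≠ 0) {w w' : WittVector p S}
    (h : ∀ j ≤ n + 1, (p : S) ^ k ∣ w.coeff j - w'.coeff j) :
    (p : S) ^ (k + 1) ∣ (frobenius w).coeff n - (frobenius w').coeff n := by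
  rw [coeff_frobenius_eq_pow_add, coeff_frobenius_eq_pow_add, add_sub_add_comm, ← mul_sub,
    pow_succ']
  exact dvd_add (pow_succ' (p : S) k ▸ pow_succ_dvd_pow_sub_pow hk (h n (by omega)))
    (mul_dvd_mul_left _ (aeval_frobeniusPolyAux_sub_dvd n h))

theorem coeff_frobenius_iterate_congr (k : ℕ) {w w' : WittVector p S} {n : ℕ}
    (h : ∀ j ≤ n + k, w.coeff j = w'.coeff j) :
    (frobenius^[k] w).coeff n = (frobenius^[k] w').coeff n := by
  induction k generalizing w w' with
  | zero => exact h n le_rfl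
  | succ k ih =>
    rw [Function.iterate_succ_apply, Function.iterate_succ_apply]
    exact ih fun j hj => coeff_frobenius_congr fun i hi => h i (by omega)

theorem pow_add_dvd_coeff_frobenius_iterate_sub {a : ℕ} (ha : a ≠ 0) (k : ℕ)
    {w w' : WittVector p S} {n : ℕ}
    (h : ∀ j ≤ n + k, (p : S) ^ a ∣ w.coeff j - w'.coeff j) :
    (p : S) ^ (a + k) ∣ (frobenius^[k] w).coeff n - (frobenius^[k] w').coeff n := by
  induction k generalizing a w w' with
  | zero => exact h n le_rfl
  | succ k ih =>
    rw [Function.iterate_succ_apply, Function.iterate_succ_apply, ← add_assoc, add_right_comm]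
    exact ih (Nat.succ_ne_zero a)
      fun j hj => pow_succ_dvd_coeff_frobenius_sub ha fun i hi => h i (by omega)

theorem pow_succ_dvd_coeff_frobenius_iterate_sub (k : ℕ) {w w' : WittVector p S} {n : ℕ}
    (h : ∀ j ≤ n + k, (p : S) ∣ w.coeff j - w'.coeff j) :
    (p : S) ^ (k + 1) ∣ (frobenius^[k] w).coeff n - (frobenius^[k] w').coeff n := by
  have := pow_add_dvd_coeff_frobenius_iterate_sub one_ne_zero k fun j hj =>
    (pow_one (p : S)).symm ▸ h j hj
  rwa [add_comm 1 k] at this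

end WittVector

section AdicLimits

variable {R : Type*} [CommRing R] {d : R}

theorem smodEq_span_singleton_pow_iff {a b : R} (k : ℕ) :
    a ≡ b [SMOD (Ideal.span {d} ^ k • ⊤ : Ideal R)] ↔ d ^ k ∣ a - b := by
  rw [SModEq.sub_mem, smul_eq_mul, Ideal.mul_top, Ideal.span_singleton_pow,
    Ideal.mem_span_singleton]

theorem eq_of_forall_pow_dvd_sub [IsHausdorff (Ideal.span {d}) R] {a b : R}
    (h : ∀ k, d ^ k ∣ a - b) : a = b :=
  IsHausdorff.eq_iff_smodEq.mpr fun k => (smodEq_span_singleton_pow_iff k).mpr (h k)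

theorem exists_forall_pow_succ_dvd_sub [IsPrecomplete (Ideal.span {d}) R] {f : ℕ → R}
    (hf : ∀ k, d ^ (k + 1) ∣ f (k + 1) - f k) : ∃ L, ∀ k, d ^ (k + 1) ∣ f k - L := by
  have hcauchy {m n : ℕ} (hmn : m ≤ n) : d ^ (m + 1) ∣ f m - f n := by
    induction n, hmn using Nat.le_induction with
    | base => simp
    | succ n hmn ih =>
      rw [← sub_add_sub_cancel _ (f n), ← neg_sub (f (n + 1))]
      exact dvd_add ih ((pow_dvd_pow d (by omega)).trans (hf n)).neg_right
  obtain ⟨L, hL⟩ := IsPrecomplete.prec inferInstance fun {m n} hmn =>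
    (smodEq_span_singleton_pow_iff m).mpr ((pow_dvd_pow d m.le_succ).trans (hcauchy hmn))
  refine ⟨L, fun k => ?_⟩
  rw [← sub_add_sub_cancel _ (f (k + 1))]
  exact dvd_add (hcauchy k.le_succ) ((smodEq_span_singleton_pow_iff _).mp (hL (k + 1)))

end AdicLimits

namespace Warrow

variable {p : ℕ} [Fact p.Prime]

theorem coeff_frobenius_out {S : Type*} [CommRing S] (x : Warrow p S) {n j : ℕ} (hj : j ≤ n) :
    (frobenius (x.1 (n + 1)).out).coeff j = (x.1 n).out.coeff j := by
  have := congrArg (TruncatedWittVector.coeff ⟨j, Nat.lt_succ_of_le hj⟩) (x.2 n)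
  rwa [truncatedFrobenius, coeff_truncate, ← TruncatedWittVector.coeff_out] at this

theorem coeff_frobenius_iterate_out {S : Type*} [CommRing S] (x : Warrow p S) (k : ℕ)
    {n j : ℕ} (hj : j ≤ n) :
    (frobenius^[k] (x.1 (n + k)).out).coeff j = (x.1 n).out.coeff j := by
  induction k with
  | zero => rfl
  | succ k ih =>
    rw [Function.iterate_succ_apply, ← ih]
    exact coeff_frobenius_iterate_congr k fun i hi => coeff_frobenius_out x (n := n + k) (by omega)

variable {R : Type*} [CommRing R]

theorem eq_of_truncatedMap_eq [IsHausdorff (Ideal.span {(p : R)}) R] {x x' : Warrow p R}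
    (h : ∀ n, truncatedMap p (n + 1) (Ideal.Quotient.mk (Ideal.span {(p : R)})) (x.1 n) =
      truncatedMap p (n + 1) (Ideal.Quotient.mk (Ideal.span {(p : R)})) (x'.1 n)) :
    x = x' := by
  have hdvd (n j : ℕ) (hj : j ≤ n) :
      (p : R) ∣ (x.1 n).out.coeff j - (x'.1 n).out.coeff j := by
    have := congrArg (TruncatedWittVector.coeff ⟨j, Nat.lt_succ_of_le hj⟩) (h n)
    rw [truncatedMap, truncatedMap, TruncatedWittVector.coeff_mk, TruncatedWittVector.coeff_mk,
      Ideal.Quotient.eq, Ideal.mem_span_singleton] at this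
    simpa only [← TruncatedWittVector.coeff_out] using this
  refine Subtype.ext (funext fun n => TruncatedWittVector.ext fun i => ?_)
  rw [← TruncatedWittVector.coeff_out, ← TruncatedWittVector.coeff_out (x'.1 n)]
  refine eq_of_forall_pow_dvd_sub (d := (p : R)) fun k => ?_
  rw [← coeff_frobenius_iterate_out x k i.is_le, ← coeff_frobenius_iterate_out x' k i.is_le]
  exact (pow_dvd_pow _ k.le_succ).trans
    (pow_succ_dvd_coeff_frobenius_iterate_sub k fun j hj => hdvd _ j (by omega))

theorem dvd_coeff_frobenius_sub_of_map_eq (y : Warrow p (R ⧸ Ideal.span {(p : R)}))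
    {Z : ℕ → WittVector p R}
    (hZ : ∀ n, WittVector.map (Ideal.Quotient.mk (Ideal.span {(p : R)})) (Z n) = (y.1 n).out)
    {n j : ℕ} (hj : j ≤ n) : (p : R) ∣ (frobenius (Z (n + 1))).coeff j - (Z n).coeff j := by
  rw [← Ideal.mem_span_singleton, ← Ideal.Quotient.eq, ← map_coeff _ (frobenius (Z (n + 1))),
    ← map_coeff _ (Z n), (frobenius_isPoly p).map, hZ, hZ]
  exact coeff_frobenius_out y hj

theorem pow_succ_dvd_coeff_frobenius_iterate_succ_sub (y : Warrow p (R ⧸ Ideal.span {(p : R)}))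
    {Z : ℕ → WittVector p R}
    (hZ : ∀ n, WittVector.map (Ideal.Quotient.mk (Ideal.span {(p : R)})) (Z n) = (y.1 n).out)
    (k : ℕ) {n j : ℕ} (hj : j ≤ n) :
    (p : R) ^ (k + 1) ∣
      (frobenius^[k + 1] (Z (n + (k + 1)))).coeff j - (frobenius^[k] (Z (n + k))).coeff j := by
  rw [Function.iterate_succ_apply]
  exact pow_succ_dvd_coeff_frobenius_iterate_sub k fun i hi =>
    dvd_coeff_frobenius_sub_of_map_eq y hZ (n := n + k) (by omega)

theorem truncatedFrobenius_mk_eq_of_pow_succ_dvd [IsHausdorff (Ideal.span {(p : R)}) R]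
    {u : ℕ → ℕ → WittVector p R} (hu : ∀ n k, frobenius (u (n + 1) k) = u n (k + 1))
    {L : ∀ n, Fin (n + 1) → R}
    (hL : ∀ n (i : Fin (n + 1)) k, (p : R) ^ (k + 1) ∣ (u n k).coeff i - L n i)
    (n : ℕ) :
    truncatedFrobenius p R n (TruncatedWittVector.mk p (L (n + 1))) =
      TruncatedWittVector.mk p (L n) := by
  refine TruncatedWittVector.ext fun i => ?_
  rw [truncatedFrobenius, coeff_truncate, TruncatedWittVector.coeff_mk]
  refine eq_of_forall_pow_dvd_sub (d := (p : R)) fun k => ?_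
  have hlift : ∀ j ≤ n + 1, (p : R) ^ (k + 1) ∣
      (TruncatedWittVector.mk p (L (n + 1))).out.coeff j - (u (n + 1) k).coeff j := by
    intro j hj
    have := hL (n + 1) ⟨j, by omega⟩ k
    rwa [dvd_sub_comm, ← TruncatedWittVector.coeff_mk (p := p) (L (n + 1)),
      ← TruncatedWittVector.coeff_out] at this
  have h := pow_succ_dvd_coeff_frobenius_sub (n := i) k.succ_ne_zero
    fun j hj => hlift j (by omega)
  rw [hu] at h
  exact (pow_dvd_pow _ (by omega)).trans
    (sub_add_sub_cancel _ _ (L n i) ▸ dvd_add h (hL n i (k + 1)))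

theorem exists_truncatedMap_eq [IsAdicComplete (Ideal.span {(p : R)}) R]
    (y : Warrow p (R ⧸ Ideal.span {(p : R)})) :
    ∃ x : Warrow p R, ∀ n,
      truncatedMap p (n + 1) (Ideal.Quotient.mk (Ideal.span {(p : R)})) (x.1 n) = y.1 n := by
  choose Z hZ using fun n => map_surjective _ Ideal.Quotient.mk_surjective (y.1 n).out
  choose L hL using fun n (i : Fin (n + 1)) => exists_forall_pow_succ_dvd_sub (d := (p : R))
    (f := fun k => (frobenius^[k] (Z (n + k))).coeff i)
    fun k => pow_succ_dvd_coeff_frobenius_iterate_succ_sub y hZ k i.is_le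
  refine ⟨⟨fun n => TruncatedWittVector.mk p (L n),
    truncatedFrobenius_mk_eq_of_pow_succ_dvd (u := fun n k => frobenius^[k] (Z (n + k)))
      (fun n k => ?_) hL⟩, fun n => ?_⟩
  · rw [← Function.iterate_succ_apply' frobenius, Nat.add_right_comm]
    rfl
  · refine TruncatedWittVector.ext fun i => ?_
    rw [truncatedMap, TruncatedWittVector.coeff_mk, TruncatedWittVector.coeff_mk,
      ← TruncatedWittVector.coeff_out (y.1 n), ← hZ, map_coeff]
    exact (Ideal.Quotient.eq.mpr (Ideal.mem_span_singleton.mpr (by simpa using hL n i 0))).symm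

end Warrow

/-- If `R` is `p`-adically complete (and separated), then the natural map
`W⃖(R) → W⃖(R/(p))` is an isomorphism. -/
theorem stmt11 (p : ℕ) [Fact p.Prime] (R : Type*) [CommRing R]
    [IsAdicComplete (Ideal.span {(p : R)}) R] :
    ∀ y : Warrow p (R ⧸ Ideal.span {(p : R)}),
      ∃! x : Warrow p R,
        ∀ n : ℕ,
          truncatedMap p (n + 1) (Ideal.Quotient.mk (Ideal.span {(p : R)})) (x.1 n) = y.1 n := by
  intro y
  obtain ⟨x, hx⟩ := Warrow.exists_truncatedMap_eq y
  exact ⟨x, hx, fun x' hx' => Warrow.eq_of_truncatedMap_eq fun n => (hx' n).trans (hx n).symm⟩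
end

section
/- Let R be a ring of characteristic p and let R' be the inverse limit of R under the p-power Frobenius endomorphism. Then (a) the natural projection W⃖(R') → W⃖(R) is an isomorphism, and (b) the Frobenius F is bijective on W⃖(R'), giving natural isomorphisms W(R') ≅ lim←_F W(R') ≅ W⃖(R'). -/
open WittVector

/-- `lim←_F W(R)`: the inverse limit of copies of `W(R)` along Frobenius. -/
def WittFrobLim (p : ℕ) [Fact p.Prime] (R : Type*) [CommRing R] : Type _ :=
  { w : ℕ → WittVector p R // ∀ n : ℕ, WittVector.frobenius (w (n + 1)) = w n }

/-!
In characteristic `p` the Witt vector Frobenius raises every coefficient to the `p`-th power,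
so a point of `W⃖(S)` is the same as a family `c n i` with `c (n + 1) i ^ p = c n i`, where
`c n i` for `i > n` is read off level `n + i` and pushed down by Frobenius. In these terms
each `n ↦ c (n + k) i` is a point of the perfection, which gives (a); a bijective ring map acts
on such families bijectively, which gives (b) for the automorphism Frobenius of `R'`;
the families are exactly the coefficients of Frobenius-compatible sequences in `W(S)`; and
`W(R') ≅ lim←_F W(R')` because Frobenius on `W(R')` is bijective.
-/

lemma iterate_apply_eq_of_map_succ {α : Type*} {f : α → α} {a : ℕ → α}
    (ha : ∀ n, f (a (n + 1)) = a n) (k : ℕ) : f^[k] (a k) = a 0 := by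
  induction k with
  | zero => rfl
  | succ k ih => rw [Function.iterate_succ_apply, ha, ih]

lemma existsUnique_inverseLimit_of_bijective {α : Type*} {f : α → α} (hf : f.Bijective)
    (z : α) : ∃! w : {w : ℕ → α // ∀ n, f (w (n + 1)) = w n}, w.1 0 = z := by
  have hsection (a : α) : f (Function.surjInv hf.2 a) = a := Function.surjInv_eq hf.2 a
  refine ⟨⟨fun n => (Function.surjInv hf.2)^[n] z,
    fun n => by simp only [Function.iterate_succ_apply', hsection]⟩, rfl, ?_⟩
  intro w hw
  ext n : 2
  induction n with
  | zero => exact hw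
  | succ n ih =>
    refine hf.1 ?_
    simp only [w.2 n, ih, Function.iterate_succ_apply', hsection]

section CharP

variable {p : ℕ} {R S : Type*} [CommRing R] [CommRing S]

@[simp]
lemma truncatedMap_coeff {n : ℕ} (f : R →+* S) (x : TruncatedWittVector p n R) (i : Fin n) :
    (truncatedMap p n f x).coeff i = f (x.coeff i) :=
  TruncatedWittVector.coeff_mk _ _

variable [Fact p.Prime] [CharP R p] [CharP S p]

@[simp]
lemma truncatedFrobenius_coeff (n : ℕ) (x : TruncatedWittVector p (n + 2) R) (i : Fin (n + 1)) :
    (truncatedFrobenius p R n x).coeff i = frobenius R p (x.coeff i.castSucc) := by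
  rw [truncatedFrobenius, WittVector.coeff_truncate, WittVector.coeff_frobenius_charP,
    frobenius_def]
  simpa using congrArg (· ^ p) (TruncatedWittVector.coeff_out x i.castSucc)

namespace Warrow

lemma frobenius_coeff_succ (y : Warrow p R) {m i : ℕ} (hi : i < m + 1) :
    frobenius R p ((y.1 (m + 1)).coeff ⟨i, by omega⟩) = (y.1 m).coeff ⟨i, hi⟩ := by
  rw [← y.2 m, truncatedFrobenius_coeff]
  rfl

def coeff (y : Warrow p R) (n i : ℕ) : R :=
  (frobenius R p)^[i] ((y.1 (n + i)).coeff ⟨i, by omega⟩)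

lemma coeff_of_lt (y : Warrow p R) {n i : ℕ} (hi : i < n + 1) :
    y.coeff n i = (y.1 n).coeff ⟨i, hi⟩ :=
  have hlevel (k : ℕ) : i < n + k + 1 := by omega
  iterate_apply_eq_of_map_succ (a := fun k => (y.1 (n + k)).coeff ⟨i, hlevel k⟩)
    (fun k => frobenius_coeff_succ y (hlevel k)) i

lemma frobenius_coeff (y : Warrow p R) (n i : ℕ) :
    frobenius R p (y.coeff (n + 1) i) = y.coeff n i := by
  simp only [coeff, ← (Function.Commute.iterate_self (frobenius R p) i).eq]
  congr 1
  -- `n + 1 + i = n + i + 1` holds only propositionally, and the `Fin` bound depends on it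
  have hshift (m : ℕ) (hm : m = n + i + 1) (hi : i < m + 1) :
      frobenius R p ((y.1 m).coeff ⟨i, hi⟩) = (y.1 (n + i)).coeff ⟨i, by omega⟩ := by
    subst hm
    exact frobenius_coeff_succ y _
  exact hshift _ (Nat.add_right_comm n 1 i) _

lemma iterate_frobenius_coeff (y : Warrow p R) (n k i : ℕ) :
    (frobenius R p)^[k] (y.coeff (n + k) i) = y.coeff n i :=
  iterate_apply_eq_of_map_succ (a := fun k => y.coeff (n + k) i)
    (fun k => frobenius_coeff y (n + k) i) k

lemma ext {x y : Warrow p R} (h : ∀ n i, x.coeff n i = y.coeff n i) : x = y := by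
  refine Subtype.ext (funext fun n => TruncatedWittVector.ext fun i => ?_)
  have hi := h n i
  rwa [coeff_of_lt x i.2, coeff_of_lt y i.2] at hi

def ofCoeff (c : ℕ → ℕ → R) (hc : ∀ n i, frobenius R p (c (n + 1) i) = c n i) : Warrow p R :=
  ⟨fun n => TruncatedWittVector.mk p fun i => c n i,
    fun n => TruncatedWittVector.ext fun i => by simp [hc]⟩

@[simp]
lemma coeff_ofCoeff (c : ℕ → ℕ → R) (hc : ∀ n i, frobenius R p (c (n + 1) i) = c n i)
    (n i : ℕ) : (ofCoeff c hc).coeff n i = c n i :=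
  iterate_apply_eq_of_map_succ (a := fun k => c (n + k) i) (fun k => hc (n + k) i) i

lemma truncatedMap_eq_iff {f : R →+* S} {x : Warrow p R} {y : Warrow p S} :
    (∀ n, truncatedMap p (n + 1) f (x.1 n) = y.1 n) ↔ ∀ n i, f (x.coeff n i) = y.coeff n i := by
  constructor
  · intro h n i
    rw [coeff, coeff, RingHom.map_iterate_frobenius, ← h (n + i), truncatedMap_coeff]
  · intro h n
    ext i
    rw [truncatedMap_coeff, ← coeff_of_lt x i.2, ← coeff_of_lt y i.2, h]

lemma existsUnique_truncatedMap_eq_s12 {f : R →+* S} (hf : Function.Bijective f) (y : Warrow p S) :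
    ∃! x : Warrow p R, ∀ n, truncatedMap p (n + 1) f (x.1 n) = y.1 n := by
  let e := RingEquiv.ofBijective f hf
  have hcompat (n i : ℕ) : frobenius R p (e.symm (y.coeff (n + 1) i)) = e.symm (y.coeff n i) := by
    rw [frobenius_def, ← map_pow, ← frobenius_def, frobenius_coeff]
  simp only [truncatedMap_eq_iff]
  refine ⟨ofCoeff (fun n i => e.symm (y.coeff n i)) hcompat,
    fun n i => by rw [coeff_ofCoeff]; exact e.apply_symm_apply _, fun x hx => ext fun n i => ?_⟩
  rw [coeff_ofCoeff]
  exact hf.1 ((hx n i).trans (e.apply_symm_apply _).symm)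

lemma existsUnique_perfection_lift (y : Warrow p R) :
    ∃! x : Warrow p (Perfection R p),
      ∀ n, truncatedMap p (n + 1) (Perfection.coeff R p 0) (x.1 n) = y.1 n := by
  let lift (n i : ℕ) : Perfection R p :=
    ⟨fun k => y.coeff (n + k) i, fun k => by rw [← frobenius_def]; exact frobenius_coeff y _ i⟩
  have hcompat (n i : ℕ) : frobenius _ p (lift (n + 1) i) = lift n i := by
    ext k
    rw [RingHom.map_frobenius, frobenius_def]
    show y.coeff (n + 1 + k) i ^ p = y.coeff (n + k) i
    rw [Nat.add_right_comm, ← frobenius_def, frobenius_coeff]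
  simp only [truncatedMap_eq_iff]
  refine ⟨ofCoeff lift hcompat, fun n i => by rw [coeff_ofCoeff]; rfl,
    fun x hx => ext fun n i => ?_⟩
  ext k
  rw [coeff_ofCoeff, ← iterate_frobenius_coeff x n k i,
    Perfection.coeff_iterate_frobenius' _ _ _ le_rfl, Nat.sub_self, hx]
  rfl

lemma existsUnique_wittFrobLim_truncate (y : Warrow p R) :
    ∃! w : WittFrobLim p R, ∀ n, WittVector.truncate (n + 1) (w.1 n) = y.1 n := by
  refine ⟨⟨fun n => WittVector.mk p (y.coeff n), fun n => ?_⟩, fun n => ?_, fun w hw => ?_⟩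
  · ext i
    rw [WittVector.coeff_frobenius_charP, WittVector.coeff_mk, WittVector.coeff_mk,
      ← frobenius_def, frobenius_coeff]
  · ext i
    rw [WittVector.coeff_truncate, WittVector.coeff_mk, coeff_of_lt y i.2]
  · refine Subtype.ext (funext fun n => WittVector.ext fun i => ?_)
    have hdescend (k : ℕ) : frobenius R p ((w.1 (n + k + 1)).coeff i) = (w.1 (n + k)).coeff i := by
      rw [frobenius_def, ← WittVector.coeff_frobenius_charP, w.2]
    calc (w.1 n).coeff i = (frobenius R p)^[i] ((w.1 (n + i)).coeff i) :=
          (iterate_apply_eq_of_map_succ (a := fun k => (w.1 (n + k)).coeff i) hdescend i).symm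
      _ = y.coeff n i := by rw [coeff, ← hw (n + i), WittVector.coeff_truncate]

end Warrow

end CharP

/-- Let `R` have characteristic `p` and let `R'` be the inverse limit of `R` under the
`p`-power Frobenius (the perfection). Then (a) the natural projection `W⃖(R') → W⃖(R)`
is an isomorphism; and (b) Frobenius is bijective on `W⃖(R')`, giving natural
isomorphisms `W(R') ≅ lim←_F W(R') ≅ W⃖(R')`. -/
theorem stmt12 (p : ℕ) [Fact p.Prime] (R : Type*) [CommRing R] [CharP R p] :
    -- (a) the projection `R' → R` induces a bijection `W⃖(R') → W⃖(R)`
    (∀ y : Warrow p R,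
      ∃! x : Warrow p (Perfection R p),
        ∀ n : ℕ, truncatedMap p (n + 1) (Perfection.coeff R p 0) (x.1 n) = y.1 n) ∧
    -- (b) Frobenius is bijective on `W⃖(R')`
    (∀ y : Warrow p (Perfection R p),
      ∃! x : Warrow p (Perfection R p),
        ∀ n : ℕ, truncatedMap p (n + 1) (frobenius (Perfection R p) p) (x.1 n) = y.1 n) ∧
    -- `W(R') ≅ lim←_F W(R')` via evaluation at the zeroth term
    (∀ z : WittVector p (Perfection R p),
      ∃! w : WittFrobLim p (Perfection R p), w.1 0 = z) ∧
    -- `lim←_F W(R') ≅ W⃖(R')` via truncation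
    (∀ y : Warrow p (Perfection R p),
      ∃! w : WittFrobLim p (Perfection R p),
        ∀ n : ℕ, WittVector.truncate (n + 1) (w.1 n) = y.1 n) :=
  ⟨Warrow.existsUnique_perfection_lift,
    Warrow.existsUnique_truncatedMap_eq_s12 (bijective_frobenius _ p),
    existsUnique_inverseLimit_of_bijective (WittVector.frobenius_bijective p _),
    Warrow.existsUnique_wittFrobLim_truncate⟩
end
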